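/- arXiv:0704.0836 — 3 statements merged into one kernel-verified Lean document; each statement's English description precedes it below -/
import Mathlib

section
/- If T is an antichain-inducing unordered partition of a labeled poset P, then F(P) = Σ_{K ∈ 𝕂_{P,T}} F(P_K); equivalently, 𝓛(P) is the disjoint union, over K ∈ 𝕂_{P,T}, of the sets of permutations whose coarsest T-segmentation induces the ordered partition K. -/
noncomputable section
open scoped Classical

/-! ## Quasisymmetric functions -/

/-- The list of exponents of a monomial, read in increasing order of the variables. -/
def expList (d : ℕ →₀ ℕ) : List ℕ := (d.support.sort (· ≤ ·)).map d

/-- The set of partial sums of a list of naturals (including `0` and the total sum). -/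
def psums (l : List ℕ) : Set ℕ := {k | ∃ i, (l.take i).sum = k}

/-- `Refines β α` : the composition `β` refines the composition `α`. -/
def Refines (β α : List ℕ) : Prop := β.sum = α.sum ∧ psums α ⊆ psums β

/-- The monomial quasisymmetric function `x^α`, as a formal power series in
countably many variables with rational coefficients. -/
def Mqs (α : List ℕ) : MvPowerSeries ℕ ℚ := fun d => if expList d = α then 1 else 0

/-- The fundamental quasisymmetric function `L_α = Σ_{β ⪯ α} x^β`. -/
def Lqs (α : List ℕ) : MvPowerSeries ℕ ℚ := fun d => if Refines (expList d) α then 1 else 0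

/-- `C(π)`: the lengths of the maximal increasing runs of a sequence. -/
def Cruns : List ℕ → List ℕ
  | [] => []
  | [_] => [1]
  | a :: b :: l =>
    match Cruns (b :: l) with
    | [] => [1]
    | k :: ks => if a < b then (k + 1) :: ks else 1 :: k :: ks

/-- A labeled poset: a binary relation on a finite set of (label) integers. -/
structure LabeledPoset where
  labels : Finset ℕ
  lt : ℕ → ℕ → Prop

/-- The conditions making a `LabeledPoset` an honest partial order on a finite
set of positive integers. -/
def LabeledPoset.IsValid (P : LabeledPoset) : Prop :=
  (∀ x ∈ P.labels, 0 < x) ∧ (∀ x y, P.lt x y → x ∈ P.labels ∧ y ∈ P.labels) ∧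
    (∀ x, ¬ P.lt x x) ∧ (∀ x y z, P.lt x y → P.lt y z → P.lt x z)

/-- `π` is a linear extension of the labeled poset `P`, listed as the sequence of labels. -/
def IsLinext (P : LabeledPoset) (π : List ℕ) : Prop :=
  π.Nodup ∧ π.toFinset = P.labels ∧ ∀ x y, P.lt x y → π.idxOf x < π.idxOf y

/-- The (finite) set `𝓛(P)` of linear extensions of `P`. -/
def linextFinset (P : LabeledPoset) : Finset (List ℕ) :=
  (P.labels.sort (· ≤ ·)).permutations.toFinset.filter (IsLinext P)

/-- The quasisymmetric function of a labeled poset: `F(P) = Σ_{π ∈ 𝓛(P)} L_{C(π)}`. -/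
def Fp (P : LabeledPoset) : MvPowerSeries ℕ ℚ := ∑ π ∈ linextFinset P, Lqs (Cruns π)

/-! ## The new basis -/

def oddSumBelow (α : List ℕ) (k : ℕ) : ℕ :=
  ∑ j ∈ (Finset.range k).filter (fun j => j % 2 = 1), α.getD j 0

def evenSumBelow (α : List ℕ) (k : ℕ) : ℕ :=
  ∑ j ∈ (Finset.range k).filter (fun j => j % 2 = 0), α.getD j 0

/-- Largest label used before the block of the (0-based) `k`-th antichain of `P_α`:
even-indexed antichains `A_2, A_4, …` (1-based) are labeled first, starting from `1`,
then the odd-indexed ones `A_1, A_3, …`. -/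
def blockStart (α : List ℕ) (k : ℕ) : ℕ :=
  if k % 2 = 1 then oddSumBelow α k else oddSumBelow α α.length + evenSumBelow α k

/-- The set of labels of the (0-based) `k`-th antichain of `P_α`. -/
def blockFS (α : List ℕ) (k : ℕ) : Finset ℕ :=
  Finset.Ioc (blockStart α k) (blockStart α k + α.getD k 0)

/-- The labeled poset `P_α = A_1 ⊕ ⋯ ⊕ A_m` of a composition `α`, with the alternating
labeling described above. -/
def Pcomp (α : List ℕ) : LabeledPoset where
  labels := Finset.Ioc 0 α.sum
  lt := fun x y => ∃ k k', k < k' ∧ k' < α.length ∧ x ∈ blockFS α k ∧ y ∈ blockFS α k'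

/-- The new basis element `N_α := F(P_α)` (in particular `N_∅ = 1`). -/
def Nqs (α : List ℕ) : MvPowerSeries ℕ ℚ := Fp (Pcomp α)

/-- The rank `r(α)` of a composition: the sum of its odd-indexed (1-based) parts. -/
def crank (l : List ℕ) : ℕ :=
  ∑ i ∈ (Finset.range l.length).filter (fun i => i % 2 = 0), l.getD i 0

/-! ## Ordered partitions -/

/-- The ordinal sum `K_1 ⊕ ⋯ ⊕ K_k` of the blocks of an ordered partition,
each block an antichain, each element labeled by itself. -/
def opPoset (K : List (Finset ℕ)) : LabeledPoset where
  labels := K.foldr (· ∪ ·) ∅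
  lt := fun x y => ∃ i j, i < j ∧ j < K.length ∧ x ∈ K.getD i ∅ ∧ y ∈ K.getD j ∅

/-- `x` and `y` lie in a common block of `T`. -/
def sameBlock (T : Finset (Finset ℕ)) (x y : ℕ) : Prop := ∃ b ∈ T, x ∈ b ∧ y ∈ b

/-- `K_T(π)`: the ordered partition induced on `π` by the unordered partition `T`,
via the coarsest segmentation of `π` whose segments lie in blocks of `T`. -/
def KT (T : Finset (Finset ℕ)) (π : List ℕ) : List (Finset ℕ) :=
  (π.splitBy fun x y => decide (sameBlock T x y)).map List.toFinset

/-! ## Matroids -/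

/-- The strict labeling of the ground set used for base posets: the elements of the
cobase `E \ B` receive the labels `1, …, |E \ B|` (in increasing order), and the
elements of `B` receive the labels `|E \ B| + 1, …, |E|` (in increasing order). -/
def labelOfIn (E B : Finset ℕ) (e : ℕ) : ℕ :=
  if e ∈ B then (E \ B).card + (B.sort (· ≤ ·)).idxOf e + 1
  else ((E \ B).sort (· ≤ ·)).idxOf e + 1

/-- The (strictly labeled) base poset `P_B` of a base `B` of the matroid on ground set `E`
whose bases are given by the predicate `Bases`: `e <_{P_B} e'` iff `e ∈ B`, `e' ∈ E \ B`
and `(B \ {e}) ∪ {e'}` is again a base. -/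
def basePoset (E : Finset ℕ) (Bases : Finset ℕ → Prop) (B : Finset ℕ) : LabeledPoset where
  labels := Finset.Ioc 0 E.card
  lt := fun x y => ∃ e ∈ B, ∃ e' ∈ E \ B,
    x = labelOfIn E B e ∧ y = labelOfIn E B e' ∧ Bases (insert e' (B.erase e))

/-- `F` of the base system on ground set `E` with bases `Bases`:
`F = Σ_{B base} F(P_B)`. -/
def FmOf (E : Finset ℕ) (Bases : Finset ℕ → Prop) : MvPowerSeries ℕ ℚ :=
  ∑ B ∈ E.powerset.filter Bases, Fp (basePoset E Bases B)

/-- The ground set of a matroid as a `Finset` (empty if the ground set is infinite). -/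
def groundFinset (M : Matroid ℕ) : Finset ℕ :=
  if h : M.E.Finite then h.toFinset else ∅

/-- The Billera–Jia–Reiner quasisymmetric function of a matroid. -/
def Fm (M : Matroid ℕ) : MvPowerSeries ℕ ℚ :=
  FmOf (groundFinset M) (fun B => M.IsBase ↑B)

/-- The number of bases of a matroid (with finite ground set). -/
def numBases (M : Matroid ℕ) : ℕ :=
  ((groundFinset M).powerset.filter (fun B => M.IsBase ↑B)).card

/-- `M` has rank `r`: every base has `r` elements. -/
def RankEq (M : Matroid ℕ) (r : ℕ) : Prop := ∀ B, M.IsBase B → B.ncard = r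

/-- A loop: an element of the ground set contained in no base. -/
def IsLoopE (M : Matroid ℕ) (e : ℕ) : Prop := e ∈ M.E ∧ ∀ B, M.IsBase B → e ∉ B

/-- A coloop: an element of the ground set contained in every base. -/
def IsColoopE (M : Matroid ℕ) (e : ℕ) : Prop := e ∈ M.E ∧ ∀ B, M.IsBase B → e ∈ B

/-- `M` is loopless: no element is a loop. -/
def LooplessE (M : Matroid ℕ) : Prop := ∀ e ∈ M.E, ¬ IsLoopE M e

/-- A circuit: a minimal dependent set. -/
def IsCircuitE (M : Matroid ℕ) (C : Set ℕ) : Prop :=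
  C ⊆ M.E ∧ ¬ M.Indep C ∧ ∀ D ⊂ C, M.Indep D

/-- Two ground set elements lie on a common circuit. -/
def circRel (M : Matroid ℕ) (x y : ℕ) : Prop := ∃ C, IsCircuitE M C ∧ x ∈ C ∧ y ∈ C

/-- `M` is connected: it has exactly one component, the components being the classes of the
equivalence relation generated by lying on a common circuit. -/
def ConnectedE (M : Matroid ℕ) : Prop :=
  M.E.Nonempty ∧ ∀ x ∈ M.E, ∀ y ∈ M.E, Relation.EqvGen (circRel M) x y

/-- Isomorphism of matroids: a bijection of the ground sets carrying bases to bases. -/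
def MatroidIso (M M' : Matroid ℕ) : Prop :=
  ∃ f : ℕ → ℕ, Set.BijOn f M.E M'.E ∧ ∀ B ⊆ M.E, (M.IsBase B ↔ M'.IsBase (f '' B))

/-! ## QSym, the ideal 𝔪 and 𝔪² -/

/-- The span of the monomial quasisymmetric functions indexed by nonempty compositions:
the homogeneous part `𝔪 = ⊕_{d ≥ 1} QSym_d` of `QSym` with zero constant term. -/
def QSymPos : Submodule ℚ (MvPowerSeries ℕ ℚ) :=
  Submodule.span ℚ {f | ∃ α : List ℕ, α ≠ [] ∧ (∀ a ∈ α, 0 < a) ∧ f = Mqs α}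

/-- `𝔪²`: the span of pairwise products of elements of `𝔪`. -/
def mSq : Submodule ℚ (MvPowerSeries ℕ ℚ) :=
  Submodule.span ℚ {h | ∃ f ∈ QSymPos, ∃ g ∈ QSymPos, h = f * g}

/-! ## Rank-two matroids -/

/-- The (0-based) `k`-th consecutive block of sizes given by `lam`, inside `{1, …, n}`. -/
def blockOfComp (lam : List ℕ) (k : ℕ) : Finset ℕ :=
  Finset.Ioc ((lam.take k).sum) ((lam.take (k + 1)).sum)

/-- The consecutive blocks of sizes `lam` partitioning `{1, …, n}`. -/
def blocksOf (lam : List ℕ) : List (Finset ℕ) :=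
  (List.range lam.length).map (blockOfComp lam)

/-- `M` is a realization of the loopless rank-two matroid with parallelism classes the
given blocks: the bases are exactly the two-element sets meeting two distinct blocks. -/
def IsBlockRealization (M : Matroid ℕ) (blocks : List (Finset ℕ)) : Prop :=
  List.Pairwise Disjoint blocks ∧ (∀ b ∈ blocks, b.Nonempty) ∧
    M.E = ↑(blocks.foldr (· ∪ ·) ∅) ∧
    ∀ B : Set ℕ, M.IsBase B ↔ ∃ x y : ℕ, x ≠ y ∧ B = {x, y} ∧
      ∃ i j, i < blocks.length ∧ j < blocks.length ∧ i ≠ j ∧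
        x ∈ blocks.getD i ∅ ∧ y ∈ blocks.getD j ∅

/-- The bases of the canonical realization of `M_lam` on `{1, …, n}`. -/
def rank2Bases (lam : List ℕ) (B : Finset ℕ) : Prop :=
  ∃ x y : ℕ, x ≠ y ∧ B = {x, y} ∧ ∃ i j, i < lam.length ∧ j < lam.length ∧ i ≠ j ∧
    x ∈ blockOfComp lam i ∧ y ∈ blockOfComp lam j

/-- `F(M_lam)` for the canonical realization of the loopless rank-two matroid `M_lam`. -/
def Frank2 (lam : List ℕ) : MvPowerSeries ℕ ℚ :=
  FmOf (Finset.Icc 1 lam.sum) (rank2Bases lam)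

/-- The composition `(2, n-2)` (interpreted as `(2)` when `n = 2`). -/
def comp2 (n : ℕ) : List ℕ := if n ≤ 2 then [2] else [2, n - 2]

/-- The composition `(1, j, 1, n-2-j)` (interpreted as `(1, n-2, 1)` when `j = n-2`). -/
def comp4 (n j : ℕ) : List ℕ := if j + 2 = n then [1, j, 1] else [1, j, 1, n - 2 - j]

/-- `T^n_k := (1/2)·N_{(2,n−2)} + Σ_{j ≥ 1} C(k−1,j)·N_{(1,j,1,n−2−j)}`. -/
def Tnk (n k : ℕ) : MvPowerSeries ℕ ℚ :=
  (2 : ℚ)⁻¹ • Nqs (comp2 n) +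
    ∑ j ∈ Finset.Icc 1 (n - 2), ((k - 1).choose j : ℚ) • Nqs (comp4 n j)

/-- `U^n_k := k(n−k)·T^n_k`. -/
def Unk (n k : ℕ) : MvPowerSeries ℕ ℚ := ((k * (n - k) : ℕ) : ℚ) • Tnk n k

/-- A representative of `Ū^n_k ∈ QSym/𝔪²`. -/
def UbarRep (n k : ℕ) : MvPowerSeries ℕ ℚ :=
  if 2 * k < n then Unk n k else if 2 * k = n then 0 else -(Unk n (n - k))

/-- The matroid base polytope `Q(M)`, inside `ℝ^ℕ`, the ground-set element `i`
being identified with the standard basis vector `e_i`. -/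
def Qpoly (M : Matroid ℕ) : Set (ℕ → ℝ) :=
  convexHull ℝ {x | ∃ B : Set ℕ, M.IsBase B ∧ x = B.indicator fun _ => (1 : ℝ)}

/-- A partition of `n`: a weakly decreasing composition of weight `n`. -/
def IsPartitionL (n : ℕ) (l : List ℕ) : Prop :=
  l.Pairwise (· ≥ ·) ∧ (∀ a ∈ l, 0 < a) ∧ l.sum = n

/-! ## Extra combinatorics for Statement 1 -/

/-- The binary word `b(π)`: first letter `true`; `i`-th letter records `π_{i−1} < π_i`. -/
def bword : List ℕ → List Bool
  | [] => []
  | a :: l => true :: List.zipWith (fun x y => decide (x < y)) (a :: l) l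

/-- Lengths of the maximal constant runs of a word. -/
def constRuns : List Bool → List ℕ
  | [] => []
  | [_] => [1]
  | a :: b :: l =>
    match constRuns (b :: l) with
    | [] => [1]
    | k :: ks => if a = b then (k + 1) :: ks else 1 :: k :: ks

/-- `ρ(π)`: the lengths of the maximal constant runs of `b(π)`. -/
def rhoComp (π : List ℕ) : List ℕ := constRuns (bword π)

/-- The distinguished linear extension of `P_α`: the antichains listed in order,
with labels increasing within odd-indexed (1-based) antichains and decreasing
within even-indexed ones. -/
def canonicalExt (α : List ℕ) : List ℕ :=
  ((List.range α.length).map fun k =>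
    if k % 2 = 0 then (blockFS α k).sort (· ≤ ·)
    else ((blockFS α k).sort (· ≤ ·)).reverse).flatten

/-!
A linear extension of an ordinal sum `K₁ ⊕ ⋯ ⊕ Kₖ` of antichains is exactly a concatenation
of orderings of the blocks `K₁, …, Kₖ`. When `K = K_T(π₀)` for a linear extension `π₀` of `P`,
each block of `K` lies inside one block of `T` and consecutive blocks of `K` lie in different
blocks of `T`, so every such concatenation `π` has `K_T(π) = K`. Conversely, since the blocks of
`K` are antichains of `P` and `π₀` extends both `P` and `P_K`, every relation of `P` is a
relation of `P_K`; hence `𝓛(P_K)` is precisely the fibre of `π ↦ K_T(π)` over `K` in `𝓛(P)`.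
-/

theorem mem_linextFinset {P : LabeledPoset} {π : List ℕ} :
    π ∈ linextFinset P ↔ IsLinext P π := by
  refine ⟨fun h => (Finset.mem_filter.1 h).2, fun h => Finset.mem_filter.2 ⟨?_, h⟩⟩
  rw [List.mem_toFinset, List.mem_permutations]
  exact List.perm_of_nodup_nodup_toFinset_eq h.1 (P.labels.sort_nodup _)
    (by rw [h.2.1, Finset.sort_toFinset])

theorem List.eq_filter_append_filter_not {α : Type*} [DecidableEq α] {p : α → Bool}
    {l : List α} (hl : l.Nodup)
    (h : ∀ x ∈ l, ∀ y ∈ l, p x → ¬ p y → l.idxOf x < l.idxOf y) :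
    l = l.filter p ++ l.filter (fun x => !p x) := by
  induction l with
  | nil => rfl
  | cons a l ih =>
    obtain ⟨hal, hl⟩ := List.nodup_cons.1 hl
    by_cases ha : p a
    · simp only [List.filter_cons, ha, if_true, Bool.not_true, Bool.false_eq_true, if_false,
        List.cons_append, List.cons.injEq, true_and]
      refine ih hl fun x hx y hy hpx hpy => ?_
      have hxa : a ≠ x := fun h => hal (h ▸ hx)
      have hya : a ≠ y := fun h => hal (h ▸ hy)
      simpa [List.idxOf_cons_ne _ hxa, List.idxOf_cons_ne _ hya] using
        h x (List.mem_cons_of_mem _ hx) y (List.mem_cons_of_mem _ hy) hpx hpy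
    · have hnot : ∀ x ∈ a :: l, ¬ p x := by
        rintro x (_ | ⟨_, hx⟩) hpx
        · exact ha hpx
        · simpa using h x (List.mem_cons_of_mem _ hx) a List.mem_cons_self hpx ha
      rw [List.filter_eq_nil_iff.2 hnot, List.filter_eq_self.2 fun x hx => by simpa using hnot x hx,
        List.nil_append]

theorem pairwise_disjoint_map_toFinset {α : Type*} [DecidableEq α] {S : List (List α)}
    (h : S.flatten.Nodup) :
    (S.map List.toFinset).Pairwise Disjoint :=
  List.pairwise_map.2 <| (List.nodup_flatten.1 h).2.imp List.disjoint_toFinset_iff_disjoint.2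

section opPoset

variable {K : List (Finset ℕ)} {b : Finset ℕ} {x y : ℕ}

theorem mem_opPoset_labels : x ∈ (opPoset K).labels ↔ ∃ i < K.length, x ∈ K.getD i ∅ := by
  induction K with
  | nil => simp [opPoset]
  | cons c K ih =>
    simp only [opPoset, List.foldr_cons, Finset.mem_union] at ih ⊢
    rw [ih]
    constructor
    · rintro (h | ⟨i, hi, hx⟩)
      · exact ⟨0, by simp, h⟩
      · exact ⟨i + 1, by simpa using hi, hx⟩
    · rintro ⟨_ | i, hi, hx⟩
      · exact Or.inl hx
      · exact Or.inr ⟨i, by simpa using hi, hx⟩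

theorem opPoset_cons_lt :
    (opPoset (b :: K)).lt x y ↔ x ∈ b ∧ y ∈ (opPoset K).labels ∨ (opPoset K).lt x y := by
  constructor
  · rintro ⟨_ | i, _ | j, hij, hj, hx, hy⟩
    · omega
    · exact Or.inl ⟨hx, mem_opPoset_labels.2 ⟨j, by simpa using hj, hy⟩⟩
    · omega
    · exact Or.inr ⟨i, j, by omega, by simpa using hj, hx, hy⟩
  · rintro (⟨hx, hy⟩ | ⟨i, j, hij, hj, hx, hy⟩)
    · obtain ⟨j, hj, hy⟩ := mem_opPoset_labels.1 hy
      exact ⟨0, j + 1, j.succ_pos, by simpa using hj, hx, hy⟩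
    · exact ⟨i + 1, j + 1, by omega, by simpa using hj, hx, hy⟩

theorem mem_opPoset_labels_of_lt (h : (opPoset K).lt x y) :
    x ∈ (opPoset K).labels ∧ y ∈ (opPoset K).labels := by
  obtain ⟨i, j, hij, hj, hx, hy⟩ := h
  exact ⟨mem_opPoset_labels.2 ⟨i, by omega, hx⟩, mem_opPoset_labels.2 ⟨j, hj, hy⟩⟩

theorem disjoint_opPoset_labels (h : ∀ c ∈ K, Disjoint b c) :
    Disjoint b (opPoset K).labels := by
  induction K with
  | nil => exact Finset.disjoint_empty_right b
  | cons c K ih =>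
    exact Finset.disjoint_union_right.2
      ⟨h c List.mem_cons_self, ih fun c' hc' => h c' (List.mem_cons_of_mem _ hc')⟩

theorem isLinext_opPoset_cons_iff (hb : Disjoint b (opPoset K).labels) {π : List ℕ} :
    IsLinext (opPoset (b :: K)) π ↔
      π.Nodup ∧ ∃ A π', π = A ++ π' ∧ A.toFinset = b ∧ IsLinext (opPoset K) π' := by
  have hlabels : (opPoset (b :: K)).labels = b ∪ (opPoset K).labels := rfl
  constructor
  · rintro ⟨hnd, hlab, hlt⟩
    rw [hlabels] at hlab
    have hsplit := List.eq_filter_append_filter_not (p := (· ∈ b)) hnd fun x hx y hy hxb hyb => by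
      have hy' := List.mem_toFinset.2 hy
      rw [hlab, Finset.mem_union] at hy'
      exact hlt x y <| opPoset_cons_lt.2 <|
        Or.inl ⟨by simpa using hxb, hy'.resolve_left (by simpa using hyb)⟩
    refine ⟨hnd, _, _, hsplit, ?_, hnd.filter _, ?_, fun x y hxy => ?_⟩
    · ext x
      simp [hlab]
    · ext x
      simp only [List.toFinset_filter, hlab, Finset.mem_filter, Finset.mem_union]
      have hxb : x ∈ (opPoset K).labels → x ∉ b := fun hx => Finset.disjoint_right.1 hb hx
      simp only [Bool.not_eq_true', decide_eq_false_iff_not]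
      tauto
    · obtain ⟨hx, hy⟩ := mem_opPoset_labels_of_lt hxy
      have h := hlt x y (opPoset_cons_lt.2 (Or.inr hxy))
      rw [hsplit, List.idxOf_append_of_notMem (by simp [Finset.disjoint_right.1 hb hx]),
        List.idxOf_append_of_notMem (by simp [Finset.disjoint_right.1 hb hy])] at h
      omega
  · rintro ⟨hnd, A, π', rfl, rfl, -, hlab', hlt'⟩
    have hA : ∀ {z}, z ∈ (opPoset K).labels → z ∉ A := fun hz hzA =>
      Finset.disjoint_left.1 hb (List.mem_toFinset.2 hzA) hz
    refine ⟨hnd, by rw [List.toFinset_append, hlab', hlabels], fun x y hxy => ?_⟩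
    rcases opPoset_cons_lt.1 hxy with ⟨hx, hy⟩ | hxy
    · rw [List.idxOf_append_of_mem (List.mem_toFinset.1 hx), List.idxOf_append_of_notMem (hA hy)]
      exact (List.idxOf_lt_length_iff.2 (List.mem_toFinset.1 hx)).trans_le (Nat.le_add_right _ _)
    · obtain ⟨hx, hy⟩ := mem_opPoset_labels_of_lt hxy
      rw [List.idxOf_append_of_notMem (hA hx), List.idxOf_append_of_notMem (hA hy)]
      exact Nat.add_lt_add_left (hlt' x y hxy) _

theorem isLinext_opPoset_iff (hK : K.Pairwise Disjoint) {π : List ℕ} :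
    IsLinext (opPoset K) π ↔
      π.Nodup ∧ ∃ S : List (List ℕ), S.flatten = π ∧ S.map List.toFinset = K := by
  induction K generalizing π with
  | nil =>
    constructor
    · rintro ⟨hnd, hlab, -⟩
      exact ⟨hnd, [], ((List.toFinset_eq_empty_iff _).1 hlab).symm, rfl⟩
    · rintro ⟨hnd, S, rfl, hS⟩
      rw [List.map_eq_nil_iff.1 hS]
      exact ⟨List.nodup_nil, rfl, fun x y ⟨i, j, _, hj, _⟩ => absurd hj (Nat.not_lt_zero _)⟩
  | cons b K ih =>
    obtain ⟨hb, hK⟩ := List.pairwise_cons.1 hK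
    replace ih := fun π' => @ih hK π'
    rw [isLinext_opPoset_cons_iff (disjoint_opPoset_labels hb)]
    refine and_congr_right fun hnd => ⟨?_, ?_⟩
    · rintro ⟨A, π', rfl, rfl, hπ'⟩
      obtain ⟨-, S', rfl, rfl⟩ := (ih _).1 hπ'
      exact ⟨A :: S', rfl, rfl⟩
    · rintro ⟨_ | ⟨A, S'⟩, rfl, hS⟩
      · simp at hS
      obtain ⟨rfl, rfl⟩ := List.cons.inj hS
      exact ⟨A, S'.flatten, rfl, rfl, (ih _).2 ⟨(List.nodup_append.1 hnd).2.1, S', rfl, rfl⟩⟩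

end opPoset

theorem IsLinext.of_isLinext_opPoset {P : LabeledPoset} {K : List (Finset ℕ)} {π₀ π : List ℕ}
    (hP : ∀ x y, P.lt x y → x ∈ P.labels ∧ y ∈ P.labels) (hπ₀ : IsLinext P π₀)
    (hπ₀K : IsLinext (opPoset K) π₀) (hanti : ∀ b ∈ K, ∀ x ∈ b, ∀ y ∈ b, ¬ P.lt x y)
    (hπ : IsLinext (opPoset K) π) : IsLinext P π := by
  have hlab : P.labels = (opPoset K).labels := hπ₀.2.1.symm.trans hπ₀K.2.1
  refine ⟨hπ.1, hπ.2.1.trans hlab.symm, fun x y hxy => hπ.2.2 x y ?_⟩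
  obtain ⟨i, hi, hx⟩ := mem_opPoset_labels.1 (hlab ▸ (hP x y hxy).1)
  obtain ⟨j, hj, hy⟩ := mem_opPoset_labels.1 (hlab ▸ (hP x y hxy).2)
  rcases lt_trichotomy i j with hij | rfl | hji
  · exact ⟨i, j, hij, hj, hx, hy⟩
  · rw [List.getD_eq_getElem _ _ hi] at hx hy
    exact absurd hxy (hanti _ (List.getElem_mem hi) x hx y hy)
  · have := hπ₀K.2.2 y x ⟨j, i, hji, hi, hy, hx⟩
    have := hπ₀.2.2 x y hxy
    omega

section sameBlock

variable {T : Finset (Finset ℕ)}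

instance : Std.Symm (sameBlock T) := ⟨fun _ _ ⟨b, hb, hx, hy⟩ => ⟨b, hb, hy, hx⟩⟩

theorem sameBlock_trans (hT : (T : Set (Finset ℕ)).Pairwise Disjoint) {x y z : ℕ}
    (hxy : sameBlock T x y) (hyz : sameBlock T y z) : sameBlock T x z := by
  obtain ⟨b, hb, hx, hy⟩ := hxy
  obtain ⟨c, hc, hy', hz⟩ := hyz
  obtain rfl := hT.eq hb hc (Finset.not_disjoint_iff.2 ⟨y, hy, hy'⟩)
  exact ⟨b, hb, hx, hz⟩

theorem pairwise_disjoint_KT {π : List ℕ} (hπ : π.Nodup) : (KT T π).Pairwise Disjoint :=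
  pairwise_disjoint_map_toFinset <| (List.flatten_splitBy _ π).symm ▸ hπ

theorem isLinext_opPoset_KT {π : List ℕ} (hπ : π.Nodup) : IsLinext (opPoset (KT T π)) π :=
  (isLinext_opPoset_iff (pairwise_disjoint_KT hπ)).2 ⟨hπ, _, List.flatten_splitBy _ π, rfl⟩

theorem sameBlock_of_mem_KT (hT : (T : Set (Finset ℕ)).Pairwise Disjoint) {π : List ℕ}
    (hπ : ∀ x ∈ π, ∃ b ∈ T, x ∈ b) {b : Finset ℕ} (hb : b ∈ KT T π) {x y : ℕ}
    (hx : x ∈ b) (hy : y ∈ b) : sameBlock T x y := by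
  obtain ⟨m, hm, rfl⟩ := List.mem_map.1 hb
  have : Trans (sameBlock T) (sameBlock T) (sameBlock T) := ⟨sameBlock_trans hT⟩
  have hchain : m.IsChain (sameBlock T) :=
    (List.isChain_of_mem_splitBy hm).imp fun _ _ h => of_decide_eq_true h
  refine hchain.pairwise.forall_of_forall (fun z hz => ?_) (List.mem_toFinset.1 hx)
    (List.mem_toFinset.1 hy)
  obtain ⟨c, hc, hzc⟩ := hπ z <| List.flatten_splitBy _ π ▸ List.mem_flatten_of_mem hm hz
  exact ⟨c, hc, hzc, hzc⟩

theorem isChain_KT (hT : (T : Set (Finset ℕ)).Pairwise Disjoint) {π : List ℕ}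
    (hπ : ∀ x ∈ π, ∃ b ∈ T, x ∈ b) :
    (KT T π).IsChain fun b c => ∀ x ∈ b, ∀ y ∈ c, ¬ sameBlock T x y := by
  rw [KT, List.isChain_map]
  refine (List.isChain_getLast_head_splitBy _ π).imp_of_mem_imp ?_
  rintro m m' hm hm' ⟨hne, hne', hsep⟩ x hx y hy hxy
  have hlast := sameBlock_of_mem_KT hT hπ (List.mem_map_of_mem hm)
    (List.mem_toFinset.2 (List.getLast_mem hne)) hx
  have hhead := sameBlock_of_mem_KT hT hπ (List.mem_map_of_mem hm')
    hy (List.mem_toFinset.2 (List.head_mem hne'))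
  exact decide_eq_false_iff_not.1 hsep
    (sameBlock_trans hT (sameBlock_trans hT hlast hxy) hhead)

theorem KT_flatten_of_map_toFinset_eq (hT : (T : Set (Finset ℕ)).Pairwise Disjoint)
    {π : List ℕ} (hπ : ∀ x ∈ π, ∃ b ∈ T, x ∈ b) {S : List (List ℕ)}
    (hS : S.map List.toFinset = KT T π) : KT T S.flatten = KT T π := by
  have hmem : ∀ {m}, m ∈ S → m.toFinset ∈ KT T π := fun hm => hS ▸ List.mem_map_of_mem hm
  have hnil : [] ∉ S := fun h => by
    obtain ⟨m, hm, hm'⟩ := List.mem_map.1 (hmem h)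
    exact List.ne_nil_of_mem_splitBy hm (List.toFinset_eq_empty_iff _ |>.1 hm')
  have hchain : ∀ m ∈ S, m.IsChain fun x y => decide (sameBlock T x y) := fun m hm =>
    List.Pairwise.isChain <| List.pairwise_of_forall_mem_list fun x hx y hy =>
      decide_eq_true <| sameBlock_of_mem_KT hT hπ (hmem hm) (List.mem_toFinset.2 hx)
        (List.mem_toFinset.2 hy)
  have hsep := isChain_KT hT hπ
  rw [← hS, List.isChain_map] at hsep
  refine (congrArg _ (List.splitBy_flatten hnil hchain (hsep.imp_of_mem_imp ?_))).trans hS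
  intro m m' hm hm' h
  exact ⟨fun h' => hnil (h' ▸ hm), fun h' => hnil (h' ▸ hm'), decide_eq_false <|
    h _ (List.mem_toFinset.2 (List.getLast_mem _)) _ (List.mem_toFinset.2 (List.head_mem _))⟩

theorem KT_eq_of_isLinext_opPoset_KT (hT : (T : Set (Finset ℕ)).Pairwise Disjoint)
    {π₀ π : List ℕ} (hπ₀ : ∀ x ∈ π₀, ∃ b ∈ T, x ∈ b) (hnd₀ : π₀.Nodup)
    (h : IsLinext (opPoset (KT T π₀)) π) : KT T π = KT T π₀ := by
  obtain ⟨-, S, rfl, hS⟩ := (isLinext_opPoset_iff (pairwise_disjoint_KT hnd₀)).1 h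
  exact KT_flatten_of_map_toFinset_eq hT hπ₀ hS

end sameBlock

theorem chain_decomposition_general (P : LabeledPoset) (hP : P.IsValid)
    (T : Finset (Finset ℕ))
    (hdisj : ∀ b ∈ T, ∀ b' ∈ T, b ≠ b' → Disjoint b b')
    (hcover : ∀ x, x ∈ P.labels ↔ ∃ b ∈ T, x ∈ b)
    (hanti : ∀ π ∈ linextFinset P, ∀ b ∈ KT T π, ∀ x ∈ b, ∀ y ∈ b, ¬ P.lt x y) :
    Fp P = (∑ K ∈ (linextFinset P).image (KT T), Fp (opPoset K)) ∧
    ∀ π : List ℕ, π.Nodup → π.toFinset = P.labels →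
      (IsLinext P π ↔ KT T π ∈ (linextFinset P).image (KT T)) := by
  have hT : (T : Set (Finset ℕ)).Pairwise Disjoint := fun b hb b' hb' => hdisj b hb b' hb'
  have hcov : ∀ π₀ ∈ linextFinset P, ∀ x ∈ π₀, ∃ b ∈ T, x ∈ b := fun π₀ h₀ x hx =>
    (hcover x).1 ((mem_linextFinset.1 h₀).2.1 ▸ List.mem_toFinset.2 hx)
  have hlift : ∀ π₀ ∈ linextFinset P, ∀ π, IsLinext (opPoset (KT T π₀)) π → IsLinext P π :=
    fun π₀ h₀ _ => (mem_linextFinset.1 h₀).of_isLinext_opPoset hP.2.1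
      (isLinext_opPoset_KT (mem_linextFinset.1 h₀).1) (hanti π₀ h₀)
  have hfiber : ∀ π₀ ∈ linextFinset P,
      linextFinset (opPoset (KT T π₀)) = (linextFinset P).filter (KT T · = KT T π₀) := by
    intro π₀ h₀
    ext π
    rw [Finset.mem_filter, mem_linextFinset, mem_linextFinset]
    exact ⟨fun h => ⟨hlift π₀ h₀ π h, KT_eq_of_isLinext_opPoset_KT hT (hcov π₀ h₀)
        (mem_linextFinset.1 h₀).1 h⟩, fun ⟨h, hK⟩ => hK ▸ isLinext_opPoset_KT h.1⟩
  refine ⟨(Finset.sum_image' _ fun π₀ h₀ => by rw [Fp, hfiber π₀ h₀]).symm, fun π hnd _ => ?_⟩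
  rw [Finset.mem_image]
  exact ⟨fun h => ⟨π, mem_linextFinset.2 h, rfl⟩,
    fun ⟨π₀, h₀, hK⟩ => hlift π₀ h₀ π (hK ▸ isLinext_opPoset_KT hnd)⟩

/-- decomposition of `F(P)` with respect to an antichain-inducing unordered
partition `T`: `F(P) = Σ_{K ∈ 𝕂_{P,T}} F(P_K)`; equivalently, `𝓛(P)` is the disjoint union
over `K ∈ 𝕂_{P,T}` of the permutations whose induced ordered partition is `K`. -/
theorem chain_decomposition (P : LabeledPoset) (hP : P.IsValid)
    (T : Finset (Finset ℕ))
    (hne : ∀ b ∈ T, b.Nonempty)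
    (hdisj : ∀ b ∈ T, ∀ b' ∈ T, b ≠ b' → Disjoint b b')
    (hcover : ∀ x, x ∈ P.labels ↔ ∃ b ∈ T, x ∈ b)
    (hanti : ∀ π ∈ linextFinset P, ∀ b ∈ KT T π, ∀ x ∈ b, ∀ y ∈ b, ¬ P.lt x y) :
    Fp P = (∑ K ∈ (linextFinset P).image (KT T), Fp (opPoset K)) ∧
    ∀ π : List ℕ, π.Nodup → π.toFinset = P.labels →
      (IsLinext P π ↔ KT T π ∈ (linextFinset P).image (KT T)) :=
  chain_decomposition_general P hP T hdisj hcover hanti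

end
end

section
/- For 1 ≤ r ≤ n−1, the uniform matroid U_{r,n} of rank r on an n-element ground set (whose bases are all r-element subsets of the ground set) satisfies F(U_{r,n}) = C(n,r) · N_{(r,n−r)}, where C(n,r) is the binomial coefficient. -/
noncomputable section
open scoped Classical

/-! In `U_{r,n}` every exchange `B - e + e'` of a base is again a base, so each base poset is the
complete bipartite order putting every element of `B` below every element of `E \ B`. With the
labelling of `labelOfIn` (cobase first, then base) this is literally `P_{(r, n-r)}`, and there are
`C(n, r)` bases. -/

open Finset

theorem Finset.image_add_idxOf_sort (S : Finset ℕ) (c : ℕ) :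
    S.image (fun e => c + (S.sort (· ≤ ·)).idxOf e + 1) = Ioc c (c + S.card) := by
  ext x
  simp only [mem_image, mem_Ioc]
  constructor
  · rintro ⟨e, he, rfl⟩
    have := List.idxOf_lt_length_iff.2 ((mem_sort (· ≤ ·)).2 he)
    rw [length_sort] at this
    omega
  · intro hx
    have hi : x - c - 1 < (S.sort (· ≤ ·)).length := by rw [length_sort]; omega
    refine ⟨_, (mem_sort _).1 (List.getElem_mem hi), ?_⟩
    rw [List.Nodup.idxOf_getElem (sort_nodup _ _)]
    omega

theorem Finset.card_insert_erase_of_notMem {B : Finset ℕ} {e e' : ℕ} (he : e ∈ B) (he' : e' ∉ B) :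
    (insert e' (B.erase e)).card = B.card := by
  rw [card_insert_of_notMem fun h => he' (mem_of_mem_erase h), card_erase_add_one he]

section BasePoset

variable {E B : Finset ℕ}

theorem image_labelOfIn_base (hB : B ⊆ E) :
    B.image (labelOfIn E B) = Ioc (E \ B).card E.card := by
  rw [← card_sdiff_add_card_eq_card hB, ← image_add_idxOf_sort]
  exact image_congr fun e he => by simp [labelOfIn, mem_coe.1 he]

theorem image_labelOfIn_cobase :
    (E \ B).image (labelOfIn E B) = Ioc 0 (E \ B).card := by
  have h := image_add_idxOf_sort (E \ B) 0
  rw [zero_add] at h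
  rw [← h]
  exact image_congr fun e he => by simp [labelOfIn, (mem_sdiff.1 (mem_coe.1 he)).2]

theorem basePoset_lt_iff_of_forall_exchange {Bases : Finset ℕ → Prop} (hB : B ⊆ E)
    (hex : ∀ e ∈ B, ∀ e' ∈ E \ B, Bases (insert e' (B.erase e))) (x y : ℕ) :
    (basePoset E Bases B).lt x y ↔ x ∈ Ioc (E \ B).card E.card ∧ y ∈ Ioc 0 (E \ B).card := by
  rw [← image_labelOfIn_base hB, ← image_labelOfIn_cobase, mem_image, mem_image]
  constructor
  · rintro ⟨e, he, e', he', rfl, rfl, -⟩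
    exact ⟨⟨e, he, rfl⟩, ⟨e', he', rfl⟩⟩
  · rintro ⟨⟨e, he, rfl⟩, ⟨e', he', rfl⟩⟩
    exact ⟨e, he, e', he', rfl, rfl, hex e he e' he'⟩

theorem Pcomp_pair_lt_iff (a b x y : ℕ) :
    (Pcomp [a, b]).lt x y ↔ x ∈ Ioc b (b + a) ∧ y ∈ Ioc 0 b := by
  have h0 : blockFS [a, b] 0 = Ioc b (b + a) := by
    simp [blockFS, blockStart, oddSumBelow, evenSumBelow, sum_filter, sum_range_succ]
  have h1 : blockFS [a, b] 1 = Ioc 0 b := by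
    simp [blockFS, blockStart, oddSumBelow, sum_filter]
  constructor
  · rintro ⟨k, k', hkk', hk', hx, hy⟩
    obtain ⟨rfl, rfl⟩ : k = 0 ∧ k' = 1 := by simp at hk'; omega
    exact ⟨h0 ▸ hx, h1 ▸ hy⟩
  · rintro ⟨hx, hy⟩
    exact ⟨0, 1, zero_lt_one, by simp, h0 ▸ hx, h1 ▸ hy⟩

theorem basePoset_eq_Pcomp_of_forall_exchange {Bases : Finset ℕ → Prop} (hB : B ⊆ E)
    (hex : ∀ e ∈ B, ∀ e' ∈ E \ B, Bases (insert e' (B.erase e))) :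
    basePoset E Bases B = Pcomp [B.card, (E \ B).card] := by
  have hcard : (E \ B).card + B.card = E.card := card_sdiff_add_card_eq_card hB
  rw [basePoset, Pcomp]
  congr 1
  · simp [← hcard, add_comm]
  · funext x y
    have hP := Pcomp_pair_lt_iff B.card (E \ B).card x y
    rw [hcard] at hP
    exact propext ((basePoset_lt_iff_of_forall_exchange hB hex x y).trans hP.symm)

end BasePoset

theorem FmOf_uniform (E : Finset ℕ) (r : ℕ) :
    FmOf E (fun B => B ⊆ E ∧ B.card = r) = (E.card.choose r : ℚ) • Nqs [r, E.card - r] := by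
  have hposet : ∀ B ∈ E.powersetCard r,
      basePoset E (fun B => B ⊆ E ∧ B.card = r) B = Pcomp [r, E.card - r] := by
    intro B hB
    obtain ⟨hBE, rfl⟩ := mem_powersetCard.1 hB
    rw [basePoset_eq_Pcomp_of_forall_exchange hBE, card_sdiff_of_subset hBE]
    intro e he e' he'
    refine ⟨insert_subset (mem_sdiff.1 he').1 ((erase_subset e B).trans hBE), ?_⟩
    exact card_insert_erase_of_notMem he (mem_sdiff.1 he').2
  calc FmOf E (fun B => B ⊆ E ∧ B.card = r)
      _ = ∑ _B ∈ E.powersetCard r, Fp (Pcomp [r, E.card - r]) :=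
        sum_congr (by ext B; simp [mem_powersetCard]) fun B hB => congrArg Fp (hposet B hB)
      _ = (E.card.choose r : ℚ) • Nqs [r, E.card - r] := by
        rw [sum_const, card_powersetCard, ← Nat.cast_smul_eq_nsmul ℚ, Nqs]

theorem groundFinset_eq {M : Matroid ℕ} {E : Finset ℕ} (hE : M.E = ↑E) : groundFinset M = E := by
  have hfin : M.E.Finite := hE ▸ E.finite_toSet
  rw [groundFinset, dif_pos hfin]
  exact coe_injective (by rw [Set.Finite.coe_toFinset, hE])

theorem uniform_matroid_F_general (M : Matroid ℕ) (E : Finset ℕ) (hE : M.E = ↑E)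
    (n r : ℕ) (hcard : E.card = n)
    (hU : ∀ B : Set ℕ, M.IsBase B ↔ B ⊆ ↑E ∧ B.ncard = r) :
    Fm M = (n.choose r : ℚ) • Nqs [r, n - r] := by
  have hbases : (fun B : Finset ℕ => M.IsBase ↑B) = fun B => B ⊆ E ∧ B.card = r := by
    funext B
    rw [hU, coe_subset, Set.ncard_coe_finset]
  rw [Fm, groundFinset_eq hE, hbases, FmOf_uniform, hcard]

/-- for the uniform matroid `U_{r,n}` (whose bases are all `r`-subsets of the
`n`-element ground set), `F(U_{r,n}) = C(n,r) · N_{(r,n−r)}`. -/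
theorem uniform_matroid_F (M : Matroid ℕ) (E : Finset ℕ) (hE : M.E = ↑E)
    (n r : ℕ) (hcard : E.card = n) (hr : 1 ≤ r) (hrn : r ≤ n - 1)
    (hU : ∀ B : Set ℕ, M.IsBase B ↔ B ⊆ ↑E ∧ B.ncard = r) :
    Fm M = (n.choose r : ℚ) • Nqs [r, n - r] :=
  uniform_matroid_F_general M E hE n r hcard hU

end
end

section
/- Let λ = (λ_1,…,λ_t) be a composition with t ≥ 2 parts and |λ| = n, let 1 ≤ s < t, set a = λ_1+⋯+λ_s and b = λ_{s+1}+⋯+λ_t. Realize M_λ on the ground set {e_1,…,e_n} of standard basis vectors of ℝ^n with parallelism classes the consecutive blocks of sizes λ_1,…,λ_t; realize M_α (for α = (a, λ_{s+1},…,λ_t)) by merging the first s blocks into one block of size a; realize M_β (for β = (λ_1,…,λ_s, b)) by merging the last t−s blocks into one block of size b; and realize M_μ (for μ = (a,b)) with the two blocks of sizes a and b. Then Q(M_λ) = Q(M_α) ∪ Q(M_β), and Q(M_α) ∩ Q(M_β) = Q(M_μ) is a face of both Q(M_α) and Q(M_β); in particular this is a matroid base polytope decomposition (a split) of Q(M_λ).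 -/
noncomputable section
open scoped Classical

/-!
Put `a = λ₁ + ⋯ + λ_s` and let `f x = ∑_{i ≤ a} x_i`. On a vertex `e_x + e_y` of `Q(M_λ)`
the form `f` counts how many of `x, y` lie in the first `s` blocks, so it takes the values
`0, 1, 2`, and the vertices of `Q(M_α)`, `Q(M_β)`, `Q(M_μ)` are exactly the vertices of
`Q(M_λ)` with `f ≤ 1`, `f ≥ 1`, `f = 1`. The hyperplane `f = 1` splits `Q(M_λ)` into the hulls
of the two sides as soon as every vertex with `f = 2` and every vertex with `f = 0` sum to two
vertices with `f = 1`; here `(e_x + e_x') + (e_y + e_y') = (e_x + e_y) + (e_x' + e_y')` for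
`x, x' ≤ a < y, y'`. Faces cut out by a supporting hyperplane give the remaining claims.
-/
open Set
open scoped Pointwise

section HyperplaneSplit

variable {E : Type*} [AddCommGroup E] [Module ℝ E] (f : E →ₗ[ℝ] ℝ) {S : Set E} {r : ℝ}

theorem convexHull_inter_hyperplane_eq (h : ∀ v ∈ S, f v ≤ r) :
    convexHull ℝ S ∩ {x | f x = r} = convexHull ℝ {v ∈ S | f v = r} := by
  refine subset_antisymm ?_ (subset_inter (convexHull_mono (sep_subset _ _))
    (convexHull_min (fun v hv => hv.2) (convex_hyperplane f.isLinear r)))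
  rintro x ⟨hx, hfx : f x = r⟩
  have hS : S = {v ∈ S | f v = r} ∪ {v ∈ S | f v < r} := by
    ext v
    refine ⟨fun hv => (h v hv).eq_or_lt.imp (fun h => ⟨hv, h⟩) (fun h => ⟨hv, h⟩), ?_⟩
    rintro (hv | hv) <;> exact hv.1
  have hlt : convexHull ℝ {v ∈ S | f v < r} ⊆ {x | f x < r} :=
    convexHull_min (fun v hv => hv.2) (convex_halfSpace_lt f.isLinear r)
  rcases eq_empty_or_nonempty {v ∈ S | f v < r} with hS₁ | hS₁
  · rwa [hS, hS₁, union_empty] at hx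
  rcases eq_empty_or_nonempty {v ∈ S | f v = r} with hS₀ | hS₀
  · rw [hS, hS₀, empty_union] at hx
    exact absurd hfx (hlt hx).ne
  rw [hS, convexHull_union hS₀ hS₁] at hx
  obtain ⟨c, hc, d, hd, a, b, -, -, hab, rfl⟩ := mem_convexJoin.1 hx
  have hfc : f c = r := convexHull_min (fun v hv => hv.2) (convex_hyperplane f.isLinear r) hc
  have hfd : f d < r := hlt hd
  simp only [map_add, map_smul, smul_eq_mul, hfc] at hfx
  have hb₀ : b * (r - f d) = 0 := by linear_combination r * hab - hfx
  obtain rfl : b = 0 := (mul_eq_zero.1 hb₀).resolve_right (sub_pos.2 hfd).ne'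
  obtain rfl : a = 1 := by linarith
  simpa using hc

theorem isExtreme_inter_hyperplane {A : Set E} (h : ∀ x ∈ A, f x ≤ r) :
    IsExtreme ℝ A (A ∩ {x | f x = r}) := by
  refine ⟨inter_subset_left, fun x₁ hx₁ x₂ hx₂ x ⟨_, hfx⟩ hseg => ⟨hx₁, ?_⟩⟩
  obtain ⟨a, b, ha, hb, hab, rfl⟩ := hseg
  obtain rfl : b = 1 - a := by linarith
  have h₁ := h x₁ hx₁
  have h₂ := h x₂ hx₂
  replace hfx : a * f x₁ + (1 - a) * f x₂ = r := by simpa using hfx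
  refine le_antisymm h₁ (by_contra fun hlt => ?_)
  nlinarith [mul_pos ha (sub_pos.2 (not_le.1 hlt)), mul_nonneg hb.le (sub_nonneg.2 h₂)]

theorem Convex.combo_mem_of_add_eq {C : Set E} (hC : Convex ℝ C) {c₀ c₁ d m₁ m₂ : E}
    (hc₀ : c₀ ∈ C) (hc₁ : c₁ ∈ C) (hm₁ : m₁ ∈ C) (hm₂ : m₂ ∈ C) (hm : m₁ + m₂ = c₀ + d)
    {a b p q : ℝ} (hb : 0 ≤ b) (hp : 0 ≤ p) (hq : 0 ≤ q) (hab : a + b = 1) (hpq : p + q = 1)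
    (hbq : b * q ≤ a) :
    a • c₀ + b • (p • c₁ + q • d) ∈ C := by
  have key : a • c₀ + b • (p • c₁ + q • d) =
      (a - b * q) • c₀ + (b * p) • c₁ + (b * q) • m₁ + (b * q) • m₂ := by
    linear_combination (norm := module) -(b * q) • hm
  have := hC.sum_mem (t := Finset.univ)
    (w := ![a - b * q, b * p, b * q, b * q]) (z := ![c₀, c₁, m₁, m₂]) ?_ ?_ ?_
  · rw [key]
    simpa [Fin.sum_univ_four] using this
  · intro i _
    fin_cases i <;> simp [hbq, mul_nonneg hb hp, mul_nonneg hb hq]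
  · simp [Fin.sum_univ_four]
    linear_combination hab + b * hpq
  · intro i _
    fin_cases i
    exacts [hc₀, hc₁, hm₁, hm₂]

theorem convexJoin_inter_halfSpace_subset
    (hex : ∀ v ∈ S, ∀ u ∈ S, f v = r - 1 → f u = r + 1 →
      ∃ p ∈ S, ∃ q ∈ S, f p = r ∧ f q = r ∧ v + u = p + q) :
    convexJoin ℝ (convexHull ℝ {v ∈ S | f v = r - 1})
        (convexJoin ℝ (convexHull ℝ {v ∈ S | f v = r}) (convexHull ℝ {v ∈ S | f v = r + 1})) ∩
      {x | f x ≤ r} ⊆ convexHull ℝ {v ∈ S | f v ≤ r} := by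
  rintro _ ⟨hx, hfx : f _ ≤ r⟩
  obtain ⟨c₀, hc₀, y, hy, a, b, -, hb, hab, rfl⟩ := mem_convexJoin.1 hx
  obtain ⟨c₁, hc₁, d, hd, p, q, hp, hq, hpq, rfl⟩ := mem_convexJoin.1 hy
  have hf : ∀ {c : ℝ}, ∀ y ∈ convexHull ℝ {v ∈ S | f v = c}, f y = c :=
    fun y hy => convexHull_min (fun v hv => hv.2) (convex_hyperplane f.isLinear _) hy
  simp only [map_add, map_smul, smul_eq_mul, hf c₀ hc₀, hf c₁ hc₁, hf d hd] at hfx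
  -- The exchange, lifted to hulls by `convexHull_add`, lets `c₀ + d` be traded for `m₁ + m₂`.
  obtain ⟨m₁, hm₁, m₂, hm₂, hm : m₁ + m₂ = c₀ + d⟩ :
      c₀ + d ∈ convexHull ℝ {v ∈ S | f v = r} + convexHull ℝ {v ∈ S | f v = r} := by
    rw [← convexHull_add]
    refine convexHull_mono ?_ (by rw [convexHull_add]; exact add_mem_add hc₀ hd)
    rintro _ ⟨v, hv, u, hu, rfl⟩
    obtain ⟨p, hp, q, hq, hfp, hfq, hvu⟩ := hex v hv.1 u hu.1 hv.2 hu.2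
    exact ⟨p, ⟨hp, hfp⟩, q, ⟨hq, hfq⟩, hvu.symm⟩
  have hS₀ : convexHull ℝ {v ∈ S | f v = r - 1} ⊆ convexHull ℝ {v ∈ S | f v ≤ r} :=
    convexHull_mono fun v hv => ⟨hv.1, by linarith [hv.2]⟩
  have hS₁ : convexHull ℝ {v ∈ S | f v = r} ⊆ convexHull ℝ {v ∈ S | f v ≤ r} :=
    convexHull_mono fun v hv => ⟨hv.1, hv.2.le⟩
  refine (convex_convexHull ℝ _).combo_mem_of_add_eq (hS₀ hc₀) (hS₁ hc₁) (hS₁ hm₁) (hS₁ hm₂)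
    hm hb hp hq hab hpq ?_
  linear_combination hfx - r * hab - (b * r) * hpq

theorem convexHull_inter_halfSpace_subset
    (hval : ∀ v ∈ S, f v = r - 1 ∨ f v = r ∨ f v = r + 1)
    (hex : ∀ v ∈ S, ∀ u ∈ S, f v = r - 1 → f u = r + 1 →
      ∃ p ∈ S, ∃ q ∈ S, f p = r ∧ f q = r ∧ v + u = p + q) :
    convexHull ℝ S ∩ {x | f x ≤ r} ⊆ convexHull ℝ {v ∈ S | f v ≤ r} := by
  rintro x ⟨hx, hfx : f x ≤ r⟩
  set S₀ := {v ∈ S | f v = r - 1}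
  set S₁ := {v ∈ S | f v = r}
  set S₂ := {v ∈ S | f v = r + 1}
  have hS : S = S₀ ∪ (S₁ ∪ S₂) := by
    ext v
    refine ⟨fun hv => ?_, by rintro (hv | hv | hv) <;> exact hv.1⟩
    rcases hval v hv with h | h | h
    exacts [Or.inl ⟨hv, h⟩, Or.inr (Or.inl ⟨hv, h⟩), Or.inr (Or.inr ⟨hv, h⟩)]
  rcases eq_empty_or_nonempty S₂ with hS₂ | ⟨u₂, hu₂⟩
  · refine convexHull_mono (fun v hv => ?_) hx
    refine ⟨hv, ?_⟩
    rcases hval v hv with h | h | h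
    · linarith
    · exact h.le
    · exact (eq_empty_iff_forall_notMem.1 hS₂ v ⟨hv, h⟩).elim
  rcases eq_empty_or_nonempty S₀ with hS₀ | ⟨u₀, hu₀⟩
  · have hge : ∀ v ∈ S, r ≤ f v := fun v hv => by
      rcases hval v hv with h | h | h
      · exact (eq_empty_iff_forall_notMem.1 hS₀ v ⟨hv, h⟩).elim
      all_goals linarith
    have hfx' : f x = r := le_antisymm hfx (convexHull_min hge (convex_halfSpace_ge f.isLinear r) hx)
    have hx' := (convexHull_inter_hyperplane_eq (-f) fun v hv => neg_le_neg (hge v hv)).subset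
      ⟨hx, show (-f) x = -r by simp [hfx']⟩
    refine convexHull_mono (fun v hv => ?_) hx'
    exact ⟨hv.1, by simp only [LinearMap.neg_apply, neg_inj] at hv; exact hv.2.le⟩
  obtain ⟨p, hp, -, -, hfp, -, -⟩ := hex u₀ hu₀.1 u₂ hu₂.1 hu₀.2 hu₂.2
  have hS₁ : S₁.Nonempty := ⟨p, hp, hfp⟩
  rw [hS, convexHull_union ⟨u₀, hu₀⟩ (hS₁.mono subset_union_left),
    convexHull_union hS₁ ⟨u₂, hu₂⟩] at hx
  exact convexJoin_inter_halfSpace_subset f hex ⟨hx, hfx⟩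

theorem convexHull_eq_union_of_exchange
    (hval : ∀ v ∈ S, f v = r - 1 ∨ f v = r ∨ f v = r + 1)
    (hex : ∀ v ∈ S, ∀ u ∈ S, f v = r - 1 → f u = r + 1 →
      ∃ p ∈ S, ∃ q ∈ S, f p = r ∧ f q = r ∧ v + u = p + q) :
    convexHull ℝ S = convexHull ℝ {v ∈ S | f v ≤ r} ∪ convexHull ℝ {v ∈ S | r ≤ f v} := by
  refine subset_antisymm (fun x hx => ?_)
    (union_subset (convexHull_mono (sep_subset _ _)) (convexHull_mono (sep_subset _ _)))
  rcases le_total (f x) r with h | h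
  · exact Or.inl (convexHull_inter_halfSpace_subset f hval hex ⟨hx, h⟩)
  have hval' : ∀ v ∈ S, (-f) v = -r - 1 ∨ (-f) v = -r ∨ (-f) v = -r + 1 := fun v hv => by
    simp only [LinearMap.neg_apply]
    rcases hval v hv with h | h | h
    · exact Or.inr (Or.inr (by linarith))
    · exact Or.inr (Or.inl (by linarith))
    · exact Or.inl (by linarith)
  have hex' : ∀ v ∈ S, ∀ u ∈ S, (-f) v = -r - 1 → (-f) u = -r + 1 →
      ∃ p ∈ S, ∃ q ∈ S, (-f) p = -r ∧ (-f) q = -r ∧ v + u = p + q := by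
    intro v hv u hu hfv hfu
    simp only [LinearMap.neg_apply] at hfv hfu
    obtain ⟨p, hp, q, hq, hfp, hfq, hvu⟩ := hex u hu v hv (by linarith) (by linarith)
    exact ⟨p, hp, q, hq, by simp [hfp], by simp [hfq], by rw [add_comm, hvu]⟩
  have := convexHull_inter_halfSpace_subset (-f) hval' hex' ⟨hx, show (-f) x ≤ -r by simpa⟩
  exact Or.inr (by simpa using this)

theorem convexHull_sep_le_inter_hyperplane :
    convexHull ℝ {v ∈ S | f v ≤ r} ∩ {x | f x = r} = convexHull ℝ {v ∈ S | f v = r} := by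
  rw [convexHull_inter_hyperplane_eq f fun v hv => hv.2]
  congr 1
  ext v
  exact ⟨fun h => ⟨h.1.1, h.2⟩, fun h => ⟨⟨h.1, h.2.le⟩, h.2⟩⟩

theorem convexHull_sep_le_inter_convexHull_sep_ge :
    convexHull ℝ {v ∈ S | f v ≤ r} ∩ convexHull ℝ {v ∈ S | r ≤ f v} =
      convexHull ℝ {v ∈ S | f v = r} := by
  refine subset_antisymm (fun x ⟨hle, hge⟩ => ?_) (subset_inter
    (convexHull_mono fun v hv => ⟨hv.1, hv.2.le⟩) (convexHull_mono fun v hv => ⟨hv.1, hv.2.ge⟩))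
  rw [← convexHull_sep_le_inter_hyperplane]
  exact ⟨hle, le_antisymm (convexHull_min (fun v hv => hv.2) (convex_halfSpace_le f.isLinear r) hle)
    (convexHull_min (fun v hv => hv.2) (convex_halfSpace_ge f.isLinear r) hge)⟩

theorem isExtreme_convexHull_sep_le :
    IsExtreme ℝ (convexHull ℝ {v ∈ S | f v ≤ r}) (convexHull ℝ {v ∈ S | f v = r}) := by
  rw [← convexHull_sep_le_inter_hyperplane]
  exact isExtreme_inter_hyperplane f
    (convexHull_min (fun v hv => hv.2) (convex_halfSpace_le f.isLinear r))

theorem isExtreme_convexHull_sep_ge :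
    IsExtreme ℝ (convexHull ℝ {v ∈ S | r ≤ f v}) (convexHull ℝ {v ∈ S | f v = r}) := by
  simpa using isExtreme_convexHull_sep_le (-f) (S := S) (r := -r)

end HyperplaneSplit

/-- `{x, y}` with `x < y` is a base of `M_l` on `{1, …, l.sum}`: a partial sum of `l` separates
`x` from `y`. -/
def IsBasePair (l : List ℕ) (x y : ℕ) : Prop :=
  0 < x ∧ y ≤ l.sum ∧ ∃ c ∈ psums l, x ≤ c ∧ c < y

theorem mem_psums {l : List ℕ} {c : ℕ} : c ∈ psums l ↔ ∃ i, (l.take i).sum = c := Iff.rfl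

theorem IsBasePair.lt {l : List ℕ} {x y : ℕ} (h : IsBasePair l x y) : x < y :=
  let ⟨_, _, _, _, hxc, hcy⟩ := h
  hxc.trans_lt hcy

theorem sum_take_le_sum (l : List ℕ) (k : ℕ) : (l.take k).sum ≤ l.sum := by
  have := List.sum_take_add_sum_drop l k
  omega

theorem blocksOf_length (l : List ℕ) : (blocksOf l).length = l.length := by
  simp [blocksOf]

theorem blocksOf_getD (l : List ℕ) (i : ℕ) : (blocksOf l).getD i ∅ = blockOfComp l i := by
  rcases lt_or_ge i l.length with hi | hi
  · simp [blocksOf, hi]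
  · rw [List.getD_eq_default _ _ (by simpa [blocksOf] using hi), blockOfComp,
      List.take_of_length_le hi, List.take_of_length_le (by omega), Finset.Ioc_self]

theorem exists_mem_blockOfComp {l : List ℕ} {z : ℕ} (h₀ : 0 < z) (h : z ≤ l.sum) :
    ∃ k < l.length, z ∈ blockOfComp l k := by
  have hex : ∃ k, z ≤ (l.take k).sum := ⟨l.length, by simpa using h⟩
  obtain ⟨i, hi⟩ : ∃ i, Nat.find hex = i + 1 :=
    Nat.exists_eq_succ_of_ne_zero fun h0 => by simpa [h0, h₀.ne'] using Nat.find_spec hex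
  have hlt : (l.take i).sum < z := not_le.1 (Nat.find_min hex (by omega))
  refine ⟨i, ?_, Finset.mem_Ioc.2 ⟨hlt, hi ▸ Nat.find_spec hex⟩⟩
  by_contra! hi'
  rw [List.take_of_length_le hi'] at hlt
  omega

theorem exists_distinct_blocks_iff_isBasePair {l : List ℕ} {x y : ℕ} (hxy : x < y) :
    (∃ i j, i < l.length ∧ j < l.length ∧ i ≠ j ∧
      x ∈ blockOfComp l i ∧ y ∈ blockOfComp l j) ↔ IsBasePair l x y := by
  have hmono : ∀ {m n : ℕ}, m ≤ n → (l.take m).sum ≤ (l.take n).sum :=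
    fun h => List.monotone_sum_take l h
  simp only [blockOfComp, Finset.mem_Ioc]
  constructor
  · rintro ⟨i, j, -, -, hij, ⟨hxi, hxi'⟩, ⟨hyj, hyj'⟩⟩
    have hij : i < j := by
      by_contra! hji
      have := hmono (show j + 1 ≤ i by omega)
      omega
    have := hmono (show i + 1 ≤ j by omega)
    exact ⟨by omega, hyj'.trans (sum_take_le_sum l _), _, ⟨i + 1, rfl⟩, hxi', by omega⟩
  · rintro ⟨hx, hy, _, ⟨k, rfl⟩, hxk, hky⟩
    obtain ⟨i, hi, hxi⟩ := exists_mem_blockOfComp hx (hxk.trans (sum_take_le_sum l k))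
    obtain ⟨j, hj, hyj⟩ := exists_mem_blockOfComp (by omega) hy
    simp only [blockOfComp, Finset.mem_Ioc] at hxi hyj
    refine ⟨i, j, hi, hj, ?_, hxi, hyj⟩
    rintro rfl
    rcases le_or_gt k i with hki | hik
    · have := hmono hki
      omega
    · have := hmono (show i + 1 ≤ k by omega)
      omega

def pairVec (x y : ℕ) : ℕ → ℝ := Pi.single x 1 + Pi.single y 1

def pairVecs (P : ℕ → ℕ → Prop) : Set (ℕ → ℝ) := {v | ∃ x y, P x y ∧ v = pairVec x y}

theorem indicator_pair_eq_pairVec {x y : ℕ} (h : x ≠ y) :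
    ({x, y} : Set ℕ).indicator (fun _ => (1 : ℝ)) = pairVec x y := by
  ext i
  by_cases hx : i = x <;> by_cases hy : i = y <;> simp_all [pairVec]

theorem pairVecs_eq_sep {P P' : ℕ → ℕ → Prop} {Q : (ℕ → ℝ) → Prop}
    (h : ∀ x y, P x y ↔ P' x y ∧ Q (pairVec x y)) :
    pairVecs P = {v ∈ pairVecs P' | Q v} := by
  ext v
  constructor
  · rintro ⟨x, y, hP, rfl⟩
    exact ⟨⟨x, y, ((h x y).1 hP).1, rfl⟩, ((h x y).1 hP).2⟩
  · rintro ⟨⟨x, y, hP', rfl⟩, hQ⟩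
    exact ⟨x, y, (h x y).2 ⟨hP', hQ⟩, rfl⟩

theorem IsBlockRealization.qpoly_eq {M : Matroid ℕ} {l : List ℕ}
    (h : IsBlockRealization M (blocksOf l)) : Qpoly M = convexHull ℝ (pairVecs (IsBasePair l)) := by
  unfold Qpoly
  congr 1
  ext v
  simp only [h.2.2.2, blocksOf_getD, blocksOf_length]
  constructor
  · rintro ⟨B, ⟨x, y, hxy, rfl, hblocks⟩, rfl⟩
    rcases hxy.lt_or_gt with hlt | hgt
    · exact ⟨x, y, (exists_distinct_blocks_iff_isBasePair hlt).1 hblocks, indicator_pair_eq_pairVec hxy⟩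
    · obtain ⟨i, j, hi, hj, hij, hx, hy⟩ := hblocks
      refine ⟨y, x, (exists_distinct_blocks_iff_isBasePair hgt).1 ⟨j, i, hj, hi, hij.symm, hy, hx⟩, ?_⟩
      rw [pair_comm, indicator_pair_eq_pairVec hxy.symm]
  · rintro ⟨x, y, hP, rfl⟩
    exact ⟨{x, y}, ⟨x, y, hP.lt.ne, rfl, (exists_distinct_blocks_iff_isBasePair hP.lt).2 hP⟩,
      (indicator_pair_eq_pairVec hP.lt.ne).symm⟩

theorem sum_take_succ_mergeHead (l : List ℕ) (s i : ℕ) :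
    (((l.take s).sum :: l.drop s).take (i + 1)).sum = (l.take (s + i)).sum := by
  rw [List.take_succ_cons, List.sum_cons, List.take_add, List.sum_append]

theorem sum_take_mergeTail (l : List ℕ) (s i : ℕ) :
    ((l.take s ++ [(l.drop s).sum]).take i).sum = if i ≤ s then (l.take i).sum else l.sum := by
  induction s generalizing l i with
  | zero => cases i <;> simp
  | succ s ih =>
    cases l with
    | nil => cases i <;> simp
    | cons c t =>
      cases i with
      | zero => simp
      | succ i =>
        simp only [List.take_succ_cons, List.drop_succ_cons, List.cons_append, List.sum_cons, ih]
        split_ifs <;> first | rfl | omega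

section MergeBlocks

variable {l : List ℕ} {s x y : ℕ}

theorem isBasePair_mergeHead_iff :
    IsBasePair ((l.take s).sum :: l.drop s) x y ↔ IsBasePair l x y ∧ (l.take s).sum < y := by
  have hsum : ((l.take s).sum :: l.drop s).sum = l.sum := by
    rw [List.sum_cons, List.sum_take_add_sum_drop]
  simp only [IsBasePair, hsum, mem_psums]
  constructor
  · rintro ⟨hx, hy, _, ⟨_ | i, rfl⟩, hxc, hcy⟩
    · simp at hxc
      omega
    · rw [sum_take_succ_mergeHead] at hxc hcy
      exact ⟨⟨hx, hy, _, ⟨s + i, rfl⟩, hxc, hcy⟩,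
        (List.monotone_sum_take l (Nat.le_add_right s i)).trans_lt hcy⟩
  · rintro ⟨⟨hx, hy, _, ⟨k, rfl⟩, hxk, hky⟩, hay⟩
    refine ⟨hx, hy, _, ⟨max k s - s + 1, rfl⟩, ?_, ?_⟩ <;>
      rw [sum_take_succ_mergeHead, Nat.add_sub_cancel' (le_max_right k s)]
    · exact hxk.trans (List.monotone_sum_take l (le_max_left k s))
    · rcases max_choice k s with h | h <;> rw [h] <;> assumption

theorem isBasePair_mergeTail_iff :
    IsBasePair (l.take s ++ [(l.drop s).sum]) x y ↔ IsBasePair l x y ∧ x ≤ (l.take s).sum := by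
  have hsum : (l.take s ++ [(l.drop s).sum]).sum = l.sum := by
    rw [List.sum_append, List.sum_singleton, List.sum_take_add_sum_drop]
  simp only [IsBasePair, hsum, mem_psums]
  constructor
  · rintro ⟨hx, hy, _, ⟨i, rfl⟩, hxc, hcy⟩
    rw [sum_take_mergeTail] at hxc hcy
    split_ifs at hxc hcy with hi
    · exact ⟨⟨hx, hy, _, ⟨i, rfl⟩, hxc, hcy⟩, hxc.trans (List.monotone_sum_take l hi)⟩
    · omega
  · rintro ⟨⟨hx, hy, _, ⟨k, rfl⟩, hxk, hky⟩, hxa⟩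
    refine ⟨hx, hy, _, ⟨min k s, rfl⟩, ?_, ?_⟩ <;>
      rw [sum_take_mergeTail, if_pos (min_le_right k s)]
    · rcases min_choice k s with h | h <;> rw [h] <;> assumption
    · exact (List.monotone_sum_take l (min_le_left k s)).trans_lt hky

theorem isBasePair_mergeBoth_iff :
    IsBasePair [(l.take s).sum, (l.drop s).sum] x y ↔
      IsBasePair l x y ∧ x ≤ (l.take s).sum ∧ (l.take s).sum < y := by
  have hsum := List.sum_take_add_sum_drop l s
  simp only [IsBasePair, mem_psums]
  constructor
  · rintro ⟨hx, hy, _, ⟨_ | _ | i, rfl⟩, hxc, hcy⟩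
    · simp at hxc
      omega
    · simp only [List.take_succ_cons, List.take_zero, List.sum_cons, List.sum_nil,
        add_zero] at hxc hcy
      exact ⟨⟨hx, by simpa [hsum] using hy, _, ⟨s, rfl⟩, hxc, hcy⟩, hxc, hcy⟩
    · simp at hy hcy
      omega
  · rintro ⟨⟨hx, hy, -⟩, hxa, hay⟩
    exact ⟨hx, by simpa [hsum] using hy, _, ⟨1, by simp⟩, hxa, hay⟩

end MergeBlocks

def initialCoordSum (a : ℕ) : (ℕ → ℝ) →ₗ[ℝ] ℝ := ∑ i ∈ Finset.Iic a, LinearMap.proj i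

theorem initialCoordSum_pairVec (a x y : ℕ) :
    initialCoordSum a (pairVec x y) = (if x ≤ a then 1 else 0) + (if y ≤ a then 1 else 0) := by
  simp [initialCoordSum, pairVec, Finset.sum_add_distrib, Pi.single_apply]

section InitialCoordSum

variable {l : List ℕ} {s : ℕ}

theorem pairVecs_mergeHead :
    pairVecs (IsBasePair ((l.take s).sum :: l.drop s)) =
      {v ∈ pairVecs (IsBasePair l) | initialCoordSum (l.take s).sum v ≤ 1} :=
  pairVecs_eq_sep fun x y => isBasePair_mergeHead_iff.trans <| and_congr_right fun h => by
    have := h.lt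
    rw [initialCoordSum_pairVec]
    split_ifs <;> norm_num <;> omega

theorem pairVecs_mergeTail :
    pairVecs (IsBasePair (l.take s ++ [(l.drop s).sum])) =
      {v ∈ pairVecs (IsBasePair l) | 1 ≤ initialCoordSum (l.take s).sum v} :=
  pairVecs_eq_sep fun x y => isBasePair_mergeTail_iff.trans <| and_congr_right fun h => by
    have := h.lt
    rw [initialCoordSum_pairVec]
    split_ifs <;> norm_num <;> omega

theorem pairVecs_mergeBoth :
    pairVecs (IsBasePair [(l.take s).sum, (l.drop s).sum]) =
      {v ∈ pairVecs (IsBasePair l) | initialCoordSum (l.take s).sum v = 1} :=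
  pairVecs_eq_sep fun x y => isBasePair_mergeBoth_iff.trans <| and_congr_right fun h => by
    have := h.lt
    rw [initialCoordSum_pairVec]
    split_ifs <;> norm_num <;> omega

theorem initialCoordSum_pairVecs_values :
    ∀ v ∈ pairVecs (IsBasePair l), initialCoordSum (l.take s).sum v = 1 - 1 ∨
      initialCoordSum (l.take s).sum v = 1 ∨ initialCoordSum (l.take s).sum v = 1 + 1 := by
  rintro _ ⟨x, y, -, rfl⟩
  rw [initialCoordSum_pairVec]
  split_ifs <;> norm_num

theorem pairVecs_exchange :
    ∀ v ∈ pairVecs (IsBasePair l), ∀ u ∈ pairVecs (IsBasePair l),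
      initialCoordSum (l.take s).sum v = 1 - 1 → initialCoordSum (l.take s).sum u = 1 + 1 →
      ∃ p ∈ pairVecs (IsBasePair l), ∃ q ∈ pairVecs (IsBasePair l),
        initialCoordSum (l.take s).sum p = 1 ∧ initialCoordSum (l.take s).sum q = 1 ∧
          v + u = p + q := by
  rintro _ ⟨x₁, x₂, hx, rfl⟩ _ ⟨y₁, y₂, hy, rfl⟩ hfx hfy
  rw [initialCoordSum_pairVec] at hfx hfy
  have hx₁₂ := hx.lt
  have hy₁₂ := hy.lt
  obtain ⟨hx₁, hx₂⟩ : (l.take s).sum < x₁ ∧ (l.take s).sum < x₂ := by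
    split_ifs at hfx <;> norm_num at hfx
    omega
  obtain ⟨hy₁, hy₂⟩ : y₁ ≤ (l.take s).sum ∧ y₂ ≤ (l.take s).sum := by
    split_ifs at hfy <;> norm_num at hfy
    omega
  refine ⟨pairVec y₁ x₁, ⟨y₁, x₁, ⟨hy.1, by linarith [hx.2.1], _, ⟨s, rfl⟩, hy₁, hx₁⟩, rfl⟩,
    pairVec y₂ x₂, ⟨y₂, x₂, ⟨by linarith [hy.1], hx.2.1, _, ⟨s, rfl⟩, hy₂, hx₂⟩, rfl⟩,
    ?_, ?_, by simp only [pairVec]; abel⟩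
  · rw [initialCoordSum_pairVec, if_pos hy₁, if_neg hx₁.not_ge]
    norm_num
  · rw [initialCoordSum_pairVec, if_pos hy₂, if_neg hx₂.not_ge]
    norm_num

end InitialCoordSum

theorem rank2_polytope_split_general (lam : List ℕ) (s : ℕ)
    (Mlam Malpha Mbeta Mmu : Matroid ℕ)
    (hlam : IsBlockRealization Mlam (blocksOf lam))
    (halpha : IsBlockRealization Malpha (blocksOf ((lam.take s).sum :: lam.drop s)))
    (hbeta : IsBlockRealization Mbeta (blocksOf (lam.take s ++ [(lam.drop s).sum])))
    (hmu : IsBlockRealization Mmu (blocksOf [(lam.take s).sum, (lam.drop s).sum])) :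
    Qpoly Mlam = Qpoly Malpha ∪ Qpoly Mbeta ∧
    Qpoly Malpha ∩ Qpoly Mbeta = Qpoly Mmu ∧
    IsExtreme ℝ (Qpoly Malpha) (Qpoly Mmu) ∧
    IsExtreme ℝ (Qpoly Mbeta) (Qpoly Mmu) := by
  rw [hlam.qpoly_eq, halpha.qpoly_eq, hbeta.qpoly_eq, hmu.qpoly_eq, pairVecs_mergeHead,
    pairVecs_mergeTail, pairVecs_mergeBoth]
  exact ⟨convexHull_eq_union_of_exchange _ initialCoordSum_pairVecs_values pairVecs_exchange,
    convexHull_sep_le_inter_convexHull_sep_ge _, isExtreme_convexHull_sep_le _,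
    isExtreme_convexHull_sep_ge _⟩

/-- the geometric hyperplane split of rank-two matroid base polytopes:
`Q(M_λ) = Q(M_α) ∪ Q(M_β)`, and `Q(M_α) ∩ Q(M_β) = Q(M_μ)` is a face of both,
i.e. this is a matroid base polytope decomposition (a split). -/
theorem rank2_polytope_split (lam : List ℕ) (hpos : ∀ a ∈ lam, 0 < a) (ht : 2 ≤ lam.length)
    (s : ℕ) (hs : 1 ≤ s) (hst : s < lam.length)
    (Mlam Malpha Mbeta Mmu : Matroid ℕ)
    (hlam : IsBlockRealization Mlam (blocksOf lam))
    (halpha : IsBlockRealization Malpha (blocksOf ((lam.take s).sum :: lam.drop s)))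
    (hbeta : IsBlockRealization Mbeta (blocksOf (lam.take s ++ [(lam.drop s).sum])))
    (hmu : IsBlockRealization Mmu (blocksOf [(lam.take s).sum, (lam.drop s).sum])) :
    Qpoly Mlam = Qpoly Malpha ∪ Qpoly Mbeta ∧
    Qpoly Malpha ∩ Qpoly Mbeta = Qpoly Mmu ∧
    IsExtreme ℝ (Qpoly Malpha) (Qpoly Mmu) ∧
    IsExtreme ℝ (Qpoly Mbeta) (Qpoly Mmu) :=
  rank2_polytope_split_general lam s Mlam Malpha Mbeta Mmu hlam halpha hbeta hmu
end
end
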